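/- Let 0<β<1, 0≤λ<1, and a∈ℂ with |a|≤1. Then the function F_{a,λ}(z)=∫_0^z exp(∫_0^ξ 2(1-β)(aη+λ)/(1+λ(a-1)η-aη²) dη) dξ is analytic on D and belongs to F(λ,β): it satisfies F_{a,λ}(0)=0, F_{a,λ}'(0)=1, F_{a,λ}''(0)=2λ(1-β), F_{a,λ}'(z)≠0 for all z∈D, and Re(1+z F_{a,λ}''(z)/F_{a,λ}'(z))>β for all z∈D. -/

import Mathlib

open Complex Set MeasureTheory

noncomputable section

/-- The open unit disk in the complex plane. -/
def unitDisk : Set ℂ := {z : ℂ | ‖z‖ < 1}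

/-- Integral of `g` along the segment from `0` to `z0`:
`∫_0^{z0} g(ξ) dξ = ∫_0^1 z0 · g(t z0) dt`. -/
def segInt (g : ℂ → ℂ) (z0 : ℂ) : ℂ :=
  ∫ t in (0:ℝ)..1, z0 * g ((t : ℂ) * z0)

/-- The branch of `log f'` vanishing at the origin, evaluated at `z0`:
`log f'(z0) = ∫_0^{z0} f''(ξ)/f'(ξ) dξ`. -/
def logDerivAt (f : ℂ → ℂ) (z0 : ℂ) : ℂ :=
  segInt (fun ξ => deriv (deriv f) ξ / deriv f ξ) z0

/-- The class `F(λ,β)`: analytic `f` on the unit disk with `f(0)=0`, `f'(0)=1`,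
`f''(0)=2λ(1-β)`, nonvanishing derivative, and `Re(1 + z f''(z)/f'(z)) > β`. -/
def IsInF (lam beta : ℝ) (f : ℂ → ℂ) : Prop :=
  DifferentiableOn ℂ f unitDisk ∧ f 0 = 0 ∧ deriv f 0 = 1 ∧
    deriv (deriv f) 0 = 2 * (lam : ℂ) * (1 - (beta : ℂ)) ∧
    (∀ z ∈ unitDisk, deriv f z ≠ 0) ∧
    (∀ z ∈ unitDisk, beta < (1 + z * deriv (deriv f) z / deriv f z).re)

/-- The region of variability `V(z0,λ,β) = {log f'(z0) : f ∈ F(λ,β)}`. -/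
def V (z0 : ℂ) (lam beta : ℝ) : Set ℂ :=
  {w : ℂ | ∃ f : ℂ → ℂ, IsInF lam beta f ∧ logDerivAt f z0 = w}

/-- `log F'_{a,λ}(z0) = ∫_0^{z0} 2(1-β)(aξ+λ)/(1+λ(a-1)ξ-aξ²) dξ`. -/
def logFext (a : ℂ) (lam beta : ℝ) (z0 : ℂ) : ℂ :=
  segInt (fun ξ => 2 * (1 - (beta : ℂ)) * (a * ξ + (lam : ℂ)) /
    (1 + (lam : ℂ) * (a - 1) * ξ - a * ξ ^ 2)) z0

/-- The extremal function `F_{a,λ}(z) = ∫_0^z exp(log F'_{a,λ}(ξ)) dξ`. -/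
def Fext (a : ℂ) (lam beta : ℝ) (z : ℂ) : ℂ :=
  segInt (fun ξ => Complex.exp (logFext a lam beta ξ)) z

/-! On the unit disk, `logFext a λ β` is a primitive of
`g(z) = 2(1-β)(az+λ)/(1+λ(a-1)z-az²)` (Morera's theorem plus the fundamental theorem of calculus
along segments), so `F_{a,λ}' = exp (logFext a λ β)` and `F_{a,λ}''/F_{a,λ}' = g`. Writing the
denominator as `A - B` with `A = 1 + λaz`, `B = z(λ + az)`, one has
`1 + z g(z) = β + (1-β)(A+B)/(A-B)`, and `‖B‖ < ‖A‖` because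
`|1+λu|² - |λ+u|² = (1-λ²)(1-|u|²) ≥ 0`; the Cayley transform then puts `(A+B)/(A-B)` in the
right half-plane. -/

open Metric

lemma unitDisk_eq_ball : unitDisk = ball (0 : ℂ) 1 := by
  ext z; simp [unitDisk]

lemma isOpen_unitDisk : IsOpen unitDisk := by
  rw [unitDisk_eq_ball]; exact isOpen_ball

lemma segInt_zero (g : ℂ → ℂ) : segInt g 0 = 0 := by
  simp [segInt]

lemma ofReal_mul_mem_ball_zero {r t : ℝ} {z : ℂ} (ht : t ∈ Icc (0 : ℝ) 1)
    (hz : z ∈ ball (0 : ℂ) r) :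
    (t : ℂ) * z ∈ ball (0 : ℂ) r := by
  rw [mem_ball_zero_iff] at hz ⊢
  rw [norm_mul, Complex.norm_real, Real.norm_of_nonneg ht.1]
  exact lt_of_le_of_lt (mul_le_of_le_one_left (norm_nonneg z) ht.2) hz

lemma segInt_eq_sub_of_hasDerivAt {g G : ℂ → ℂ} {z : ℂ}
    (hG : ∀ t ∈ Icc (0 : ℝ) 1, HasDerivAt G (g (t * z)) (t * z))
    (hg : ContinuousOn (fun t : ℝ => g (t * z)) (Icc 0 1)) :
    segInt g z = G z - G 0 := by
  rw [← uIcc_of_le zero_le_one] at hG hg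
  have hderiv : ∀ t ∈ uIcc (0 : ℝ) 1,
      HasDerivAt (fun t : ℝ => G (t * z)) (z * g (t * z)) t := fun t ht => by
    simpa [mul_comm] using ((hG t ht).comp (t : ℂ) (hasDerivAt_mul_const z)).comp_ofReal
  simpa [segInt] using intervalIntegral.integral_eq_sub_of_hasDerivAt hderiv
    (continuousOn_const.mul hg).intervalIntegrable

lemma hasDerivAt_segInt {g : ℂ → ℂ} {r : ℝ} (hg : DifferentiableOn ℂ g (ball 0 r)) {z : ℂ}
    (hz : z ∈ ball (0 : ℂ) r) : HasDerivAt (segInt g) (g z) z := by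
  obtain ⟨G, hG⟩ := hg.isExactOn_ball
  have hsegInt : ∀ w ∈ ball (0 : ℂ) r, segInt g w = G w - G 0 := fun w hw =>
    segInt_eq_sub_of_hasDerivAt (fun t ht => hG _ (ofReal_mul_mem_ball_zero ht hw))
      (hg.continuousOn.comp (by fun_prop) fun t ht => ofReal_mul_mem_ball_zero ht hw)
  exact ((hG z hz).sub_const (G 0)).congr_of_eventuallyEq
    (Filter.eventuallyEq_of_mem (isOpen_ball.mem_nhds hz) hsegInt)

lemma hasDerivAt_segInt_of_mem_unitDisk {g : ℂ → ℂ} (hg : DifferentiableOn ℂ g unitDisk) {z : ℂ}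
    (hz : z ∈ unitDisk) : HasDerivAt (segInt g) (g z) z := by
  rw [unitDisk_eq_ball] at hg hz
  exact hasDerivAt_segInt hg hz

theorem isInF_segInt_exp_segInt {lam beta : ℝ} {g : ℂ → ℂ} (hg : DifferentiableOn ℂ g unitDisk)
    (hg0 : g 0 = 2 * lam * (1 - beta)) (hre : ∀ z ∈ unitDisk, beta < (1 + z * g z).re) :
    IsInF lam beta (segInt fun ξ => exp (segInt g ξ)) := by
  set F := segInt fun ξ => exp (segInt g ξ)
  have hL : ∀ z ∈ unitDisk, HasDerivAt (segInt g) (g z) z := fun z hz =>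
    hasDerivAt_segInt_of_mem_unitDisk hg hz
  have hF : ∀ z ∈ unitDisk, HasDerivAt F (exp (segInt g z)) z := fun z hz =>
    hasDerivAt_segInt_of_mem_unitDisk
      (fun w hw => (hL w hw).differentiableAt.cexp.differentiableWithinAt) hz
  have hF' : ∀ z ∈ unitDisk, deriv F z = exp (segInt g z) := fun z hz => (hF z hz).deriv
  have hF'' : ∀ z ∈ unitDisk, deriv (deriv F) z = exp (segInt g z) * g z := fun z hz => by
    rw [(Filter.eventuallyEq_of_mem (isOpen_unitDisk.mem_nhds hz) hF').deriv_eq]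
    exact (hL z hz).cexp.deriv
  have h0 : (0 : ℂ) ∈ unitDisk := by simp [unitDisk]
  refine ⟨fun z hz => (hF z hz).differentiableAt.differentiableWithinAt, segInt_zero _, ?_, ?_,
    fun z hz => by simp [hF' z hz, exp_ne_zero], fun z hz => ?_⟩
  · simp [hF' 0 h0, segInt_zero]
  · simp [hF'' 0 h0, segInt_zero, hg0]
  · rw [hF' z hz, hF'' z hz, mul_div_assoc, mul_div_cancel_left₀ _ (exp_ne_zero _)]
    exact hre z hz

lemma norm_ofReal_add_le_norm_one_add_ofReal_mul {lam : ℝ} (hlam : |lam| ≤ 1) {u : ℂ}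
    (hu : ‖u‖ ≤ 1) : ‖(lam : ℂ) + u‖ ≤ ‖1 + lam * u‖ := by
  have hdiff : normSq (1 + lam * u) - normSq (lam + u) = (1 - lam ^ 2) * (1 - normSq u) := by
    simp only [normSq_apply, add_re, add_im, mul_re, mul_im, ofReal_re, ofReal_im, one_re, one_im]
    ring
  have hlam2 : lam ^ 2 ≤ 1 := (sq_le_one_iff_abs_le_one lam).2 hlam
  have hu2 : normSq u ≤ 1 := by rw [normSq_eq_norm_sq]; exact pow_le_one₀ (norm_nonneg u) hu
  rw [← sq_le_sq₀ (norm_nonneg _) (norm_nonneg _), ← normSq_eq_norm_sq, ← normSq_eq_norm_sq]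
  nlinarith [mul_nonneg (sub_nonneg.2 hlam2) (sub_nonneg.2 hu2)]

lemma norm_mul_ofReal_add_lt {lam : ℝ} (hlam : |lam| ≤ 1) {a z : ℂ} (ha : ‖a‖ ≤ 1)
    (hz : ‖z‖ < 1) : ‖z * (lam + a * z)‖ < ‖1 + lam * (a * z)‖ := by
  have haz : ‖a * z‖ < 1 := by
    rw [norm_mul]; exact lt_of_le_of_lt (mul_le_of_le_one_left (norm_nonneg z) ha) hz
  have hpos : 0 < ‖1 + lam * (a * z)‖ := by
    have : ‖(lam : ℂ) * (a * z)‖ < 1 := by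
      rw [norm_mul, norm_real, Real.norm_eq_abs]
      exact lt_of_le_of_lt (mul_le_of_le_one_left (norm_nonneg _) hlam) haz
    have := norm_sub_norm_le (1 : ℂ) (-(lam * (a * z)))
    rw [norm_neg, sub_neg_eq_add, norm_one] at this
    linarith
  calc ‖z * (lam + a * z)‖ = ‖z‖ * ‖(lam : ℂ) + a * z‖ := norm_mul _ _
    _ ≤ ‖z‖ * ‖1 + lam * (a * z)‖ := by
      gcongr; exact norm_ofReal_add_le_norm_one_add_ofReal_mul hlam haz.le
    _ < ‖1 + lam * (a * z)‖ := mul_lt_of_lt_one_left hpos hz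

lemma re_add_div_sub_pos {A B : ℂ} (h : ‖B‖ < ‖A‖) : 0 < ((A + B) / (A - B)).re := by
  have hAB : A - B ≠ 0 := fun h0 => by rw [sub_eq_zero.1 h0] at h; exact lt_irrefl _ h
  have hnum : (A + B).re * (A - B).re + (A + B).im * (A - B).im = normSq A - normSq B := by
    simp only [normSq_apply, add_re, sub_re, add_im, sub_im]; ring
  rw [div_re, ← add_div, hnum]
  refine div_pos ?_ (normSq_pos.2 hAB)
  rw [normSq_eq_norm_sq, normSq_eq_norm_sq, sub_pos]
  exact pow_lt_pow_left₀ h (norm_nonneg _) two_ne_zero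

/-- `F_{a,λ}'' / F_{a,λ}'`, the integrand of `logFext`. -/
def logFextDeriv (a : ℂ) (lam beta : ℝ) (ξ : ℂ) : ℂ :=
  2 * (1 - (beta : ℂ)) * (a * ξ + (lam : ℂ)) / (1 + (lam : ℂ) * (a - 1) * ξ - a * ξ ^ 2)

section logFextDeriv

variable {a : ℂ} {lam : ℝ}

lemma logFextDeriv_denom_eq_sub (z : ℂ) :
    1 + (lam : ℂ) * (a - 1) * z - a * z ^ 2 = (1 + lam * (a * z)) - z * (lam + a * z) := by
  ring

lemma logFextDeriv_denom_ne_zero (hlam : |lam| ≤ 1) (ha : ‖a‖ ≤ 1) {z : ℂ} (hz : z ∈ unitDisk) :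
    1 + (lam : ℂ) * (a - 1) * z - a * z ^ 2 ≠ 0 := by
  rw [logFextDeriv_denom_eq_sub, sub_ne_zero]
  exact fun h => (norm_mul_ofReal_add_lt hlam ha hz).ne' (by rw [h])

lemma differentiableOn_logFextDeriv (beta : ℝ) (hlam : |lam| ≤ 1) (ha : ‖a‖ ≤ 1) :
    DifferentiableOn ℂ (logFextDeriv a lam beta) unitDisk :=
  DifferentiableOn.div (by fun_prop) (by fun_prop) fun _ hz => logFextDeriv_denom_ne_zero hlam ha hz

lemma logFextDeriv_zero (beta : ℝ) : logFextDeriv a lam beta 0 = 2 * lam * (1 - beta) := by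
  simp [logFextDeriv]; ring

lemma one_add_mul_logFextDeriv (beta : ℝ) {z : ℂ}
    (hD : 1 + (lam : ℂ) * (a - 1) * z - a * z ^ 2 ≠ 0) :
    1 + z * logFextDeriv a lam beta z = beta + (1 - beta) *
      (((1 + lam * (a * z)) + z * (lam + a * z)) / ((1 + lam * (a * z)) - z * (lam + a * z))) := by
  rw [logFextDeriv_denom_eq_sub] at hD
  rw [logFextDeriv, logFextDeriv_denom_eq_sub, mul_div_assoc', mul_div_assoc', eq_comm, add_div' _ _ _ hD,
    add_div' _ _ _ hD, div_left_inj' hD]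
  ring

lemma lt_re_one_add_mul_logFextDeriv {beta : ℝ} (hbeta : beta < 1) (hlam : |lam| ≤ 1)
    (ha : ‖a‖ ≤ 1) {z : ℂ} (hz : z ∈ unitDisk) :
    beta < (1 + z * logFextDeriv a lam beta z).re := by
  have hpos := re_add_div_sub_pos (norm_mul_ofReal_add_lt hlam ha hz)
  rw [one_add_mul_logFextDeriv beta (logFextDeriv_denom_ne_zero hlam ha hz)]
  simp only [add_re, mul_re, sub_re, sub_im, one_re, one_im, ofReal_re, ofReal_im]
  nlinarith

end logFextDeriv

/-- for `0 < β < 1`, `0 ≤ λ < 1` and `|a| ≤ 1`, the extremal function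
`F_{a,λ}` is analytic on `D` and belongs to `F(λ,β)`. -/
theorem Fext_mem_F (beta lam : ℝ) (hbeta : 0 < beta ∧ beta < 1)
    (hlam : 0 ≤ lam ∧ lam < 1) (a : ℂ) (ha : ‖a‖ ≤ 1) :
    DifferentiableOn ℂ (Fext a lam beta) unitDisk ∧ IsInF lam beta (Fext a lam beta) := by
  have hlam' : |lam| ≤ 1 := abs_le.2 ⟨by linarith, hlam.2.le⟩
  have hF : IsInF lam beta (Fext a lam beta) :=
    isInF_segInt_exp_segInt (differentiableOn_logFextDeriv beta hlam' ha) (logFextDeriv_zero beta)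
      fun _ hz => lt_re_one_add_mul_logFextDeriv hbeta.2 hlam' ha hz
  exact ⟨hF.1, hF⟩
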